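/- Let ρ⃗ = {ρ_n} and σ⃗ = {σ_n} be sequences of density operators on finite-dimensional complex Hilbert spaces H_n, and for each n let Φ_n be a linear map on the operators on H_n that is completely positive (for every k ∈ ℕ, the map id_k ⊗ Φ_n sends positive semidefinite operators on ℂ^k ⊗ H_n to positive semidefinite operators) and trace-preserving. Then for every ε ∈ [0,1], D̲(ε|ρ⃗‖σ⃗) ≥ D̲(ε|{Φ_n(ρ_n)}‖{Φ_n(σ_n)}). -/

import Mathlib

open Filter Matrix
open scoped Classical ComplexOrder

noncomputable section

section Defs

variable {ι : Type*} [Fintype ι] [DecidableEq ι]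

/-- A density operator: a positive semidefinite operator with unit trace. -/
def IsDensityOp (A : Matrix ι ι ℂ) : Prop := A.PosSemidef ∧ A.trace = 1

/-- A test (POVM element): an operator `T` with `0 ≤ T ≤ I`. -/
def IsTest (T : Matrix ι ι ℂ) : Prop :=
  T.PosSemidef ∧ ((1 : Matrix ι ι ℂ) - T).PosSemidef

/-- An orthogonal projection: a Hermitian idempotent operator. -/
def IsOrthProj (P : Matrix ι ι ℂ) : Prop := P.IsHermitian ∧ P * P = P

/-- The orthogonal projection `{X ≥ 0}` onto the direct sum of eigenspaces of a Hermitian `X`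
with nonnegative eigenvalues (junk value `0` if `X` is not Hermitian). -/
def nnProj (X : Matrix ι ι ℂ) : Matrix ι ι ℂ :=
  if hX : X.IsHermitian then
    (hX.eigenvectorUnitary : Matrix ι ι ℂ) *
      (Matrix.diagonal fun i => if 0 ≤ hX.eigenvalues i then (1 : ℂ) else 0) *
      star (hX.eigenvectorUnitary : Matrix ι ι ℂ)
  else 0

/-- The type-I error `Tr[(I - {ρ - μ σ ≥ 0}) ρ]` of the spectral test. -/
def specErr (ρ σ : Matrix ι ι ℂ) (μ : ℝ) : ℝ :=
  (((1 : Matrix ι ι ℂ) - nnProj (ρ - (μ : ℂ) • σ)) * ρ).trace.re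

/-- Optimal ε-achievable type-II error `β_ε(ρ‖S)` against a set `S` of states. -/
def betaSet (ε : ℝ) (ρ : Matrix ι ι ℂ) (S : Set (Matrix ι ι ℂ)) : ℝ :=
  sInf {x : ℝ | ∃ T : Matrix ι ι ℂ, IsTest T ∧
    (((1 : Matrix ι ι ℂ) - T) * ρ).trace.re ≤ ε ∧
    x = sSup {y : ℝ | ∃ σ ∈ S, y = (T * σ).trace.re}}

/-- `log` of a Hermitian matrix via the functional calculus (with `Real.log 0 = 0`
on the kernel); junk value `0` if not Hermitian. -/
def hermLog (X : Matrix ι ι ℂ) : Matrix ι ι ℂ :=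
  if hX : X.IsHermitian then
    (hX.eigenvectorUnitary : Matrix ι ι ℂ) *
      (Matrix.diagonal fun i => (Real.log (hX.eigenvalues i) : ℂ)) *
      star (hX.eigenvectorUnitary : Matrix ι ι ℂ)
  else 0

/-- Support inclusion `supp ρ ⊆ supp σ`, expressed as kernel inclusion `ker σ ⊆ ker ρ`. -/
def SuppLE (ρ σ : Matrix ι ι ℂ) : Prop :=
  ∀ v : ι → ℂ, σ.mulVec v = 0 → ρ.mulVec v = 0

/-- Umegaki quantum relative entropy `D(ρ‖σ) = Tr[ρ(log ρ - log σ)]` if `supp ρ ⊆ supp σ`,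
and `+∞` otherwise. -/
def relEnt (ρ σ : Matrix ι ι ℂ) : EReal :=
  if SuppLE ρ σ then (((ρ * (hermLog ρ - hermLog σ)).trace.re : ℝ) : EReal) else ⊤

/-- The spectral projection of a Hermitian matrix onto the eigenspace of eigenvalue `μ`. -/
def eigProjAt (X : Matrix ι ι ℂ) (μ : ℝ) : Matrix ι ι ℂ :=
  if hX : X.IsHermitian then
    (hX.eigenvectorUnitary : Matrix ι ι ℂ) *
      (Matrix.diagonal fun i => if hX.eigenvalues i = μ then (1 : ℂ) else 0) *
      star (hX.eigenvectorUnitary : Matrix ι ι ℂ)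
  else 0

/-- The number of distinct eigenvalues of a Hermitian matrix. -/
def distinctEigCount (X : Matrix ι ι ℂ) : ℕ :=
  if hX : X.IsHermitian then (Finset.univ.image hX.eigenvalues).card else 0

/-- The pinching map with respect to `σ`: `ρ ↦ Σ_μ Π_μ ρ Π_μ` over the distinct
eigenvalues `μ` of `σ`. -/
def pinch (σ ρ : Matrix ι ι ℂ) : Matrix ι ι ℂ :=
  if hσ : σ.IsHermitian then
    ∑ μ ∈ Finset.univ.image hσ.eigenvalues, eigProjAt σ μ * ρ * eigProjAt σ μ
  else ρ

/-- The amplification `id_k ⊗ Φ` of a linear map on operators. -/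
def ampl (k : ℕ) (Φ : Matrix ι ι ℂ →ₗ[ℂ] Matrix ι ι ℂ)
    (M : Matrix (Fin k × ι) (Fin k × ι) ℂ) : Matrix (Fin k × ι) (Fin k × ι) ℂ :=
  Matrix.of fun p q => Φ (Matrix.of fun x y => M (p.1, x) (q.1, y)) p.2 q.2

/-- Complete positivity: every amplification `id_k ⊗ Φ` maps positive semidefinite
operators to positive semidefinite operators. -/
def IsCP (Φ : Matrix ι ι ℂ →ₗ[ℂ] Matrix ι ι ℂ) : Prop :=
  ∀ k : ℕ, ∀ M : Matrix (Fin k × ι) (Fin k × ι) ℂ, M.PosSemidef → (ampl k Φ M).PosSemidef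

/-- Trace preservation. -/
def IsTP (Φ : Matrix ι ι ℂ →ₗ[ℂ] Matrix ι ι ℂ) : Prop :=
  ∀ X : Matrix ι ι ℂ, (Φ X).trace = X.trace

end Defs

section SeqDefs

variable {Hn : ℕ → Type*} [∀ n, Fintype (Hn n)] [∀ n, DecidableEq (Hn n)]

/-- The spectral inf-divergence rate `D̲(ε|ρ⃗‖σ⃗)`. -/
def Dlow (ε : ℝ) (ρ σ : (n : ℕ) → Matrix (Hn n) (Hn n) ℂ) : EReal :=
  sSup ((fun a : ℝ => (a : EReal)) ''
    {a : ℝ | Filter.limsup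
      (fun n : ℕ => specErr (ρ n) (σ n) (Real.exp (n * a))) Filter.atTop ≤ ε})

/-- The supremum ε-achievable type-II error exponent `B(ε|ρ⃗‖σ⃗)`. -/
def Bexp (ε : ℝ) (ρ σ : (n : ℕ) → Matrix (Hn n) (Hn n) ℂ) : EReal :=
  sSup {x : EReal | ∃ T : (n : ℕ) → Matrix (Hn n) (Hn n) ℂ,
    (∀ n, IsTest (T n)) ∧
    Filter.limsup
      (fun n : ℕ => (((1 : Matrix (Hn n) (Hn n) ℂ) - T n) * ρ n).trace.re)
      Filter.atTop ≤ ε ∧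
    x = Filter.liminf
      (fun n : ℕ => ((↑(-(1 / (n : ℝ)) * Real.log ((T n * σ n).trace.re))) : EReal))
      Filter.atTop}

end SeqDefs

section TensorDefs

variable {H : Type*} [Fintype H] [DecidableEq H]

/-- The IID tensor power `A^{⊗n}`, acting on `H^{⊗n}` modeled with index type `Fin n → H`. -/
def tpow (A : Matrix H H ℂ) (n : ℕ) : Matrix (Fin n → H) (Fin n → H) ℂ :=
  Matrix.of fun x y => ∏ k : Fin n, A (x k) (y k)

/-- Tensor product of operators on `H^{⊗n}` and `H^{⊗m}`, as an operator on `H^{⊗(n+m)}`. -/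
def mTensor {n m : ℕ} (A : Matrix (Fin n → H) (Fin n → H) ℂ)
    (B : Matrix (Fin m → H) (Fin m → H) ℂ) :
    Matrix (Fin (n + m) → H) (Fin (n + m) → H) ℂ :=
  Matrix.of fun x y =>
    A (fun k => x (Fin.castAdd m k)) (fun k => y (Fin.castAdd m k)) *
      B (fun k => x (Fin.natAdd n k)) (fun k => y (Fin.natAdd n k))

end TensorDefs

/-- Classical spectral inf-divergence rate (with vanishing type-I error) for sequences of
(finitely supported) distributions on `ℕ`. -/
def cDlow (ρ σ : ℕ → ℕ → ℝ) : EReal :=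
  sSup ((fun a : ℝ => (a : EReal)) ''
    {a : ℝ | Filter.limsup
      (fun n : ℕ => ∑' x : ℕ, if ρ n x < Real.exp (n * a) * σ n x then ρ n x else 0)
      Filter.atTop = 0})
/-!
Pull the optimal spectral test back through the channel. If `Q = {Φρ - μ Φσ ≥ 0}`, the
trace-dual `Φ†Q` (defined by `Tr[Φ†(Q) A] = Tr[Q Φ(A)]`) is again a test, since `Φ` is
positive and trace preserving, and it has the same statistics on `ρ, σ` as `Q` on `Φρ, Φσ`.
The Neyman–Pearson property of `P = {ρ - μ' σ ≥ 0}` gives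
`Tr[(Φ†Q)(ρ - μ'σ)] ≤ Tr[P(ρ - μ'σ)]`, and `Tr[Q Φσ] ≤ 1/μ`, so the type-I error of `P`
exceeds that of `Q` by at most `μ'/μ`. With
`μ' = e^{na'}`, `μ = e^{na}` and `a' < a` this excess vanishes as `n → ∞`, so every rate
admissible for the processed sequences is a limit of rates admissible for the original ones.
-/

open scoped Topology

lemma Matrix.IsHermitian.sub_real_smul {ι : Type*} {A B : Matrix ι ι ℂ} (hA : A.IsHermitian)
    (hB : B.IsHermitian) (μ : ℝ) : (A - (μ : ℂ) • B).IsHermitian :=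
  hA.sub (hB.smul (Complex.conj_ofReal μ))

section TracePairing

variable {ι : Type*} [Fintype ι]

lemma Matrix.PosSemidef.trace_mul_nonneg {A B : Matrix ι ι ℂ} (hA : A.PosSemidef)
    (hB : B.PosSemidef) : 0 ≤ (A * B).trace := by
  obtain ⟨C, rfl⟩ : ∃ C : Matrix ι ι ℂ, A = Cᴴ * C := by
    open scoped MatrixOrder in exact CStarAlgebra.nonneg_iff_eq_star_mul_self.mp hA.nonneg
  rw [Matrix.mul_assoc, trace_mul_comm]
  simpa [Matrix.mul_assoc] using (hB.mul_mul_conjTranspose_same C).trace_nonneg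

lemma Matrix.PosSemidef.re_trace_mul_nonneg {A B : Matrix ι ι ℂ} (hA : A.PosSemidef)
    (hB : B.PosSemidef) : 0 ≤ (A * B).trace.re :=
  (Complex.nonneg_iff.mp (hA.trace_mul_nonneg hB)).1

lemma Matrix.posSemidef_of_forall_trace_mul_nonneg {B : Matrix ι ι ℂ} (hB : B.IsHermitian)
    (h : ∀ P : Matrix ι ι ℂ, P.PosSemidef → 0 ≤ (B * P).trace) : B.PosSemidef := by
  refine posSemidef_iff_dotProduct_mulVec.mpr ⟨hB, fun v => ?_⟩
  simpa [mul_vecMulVec, trace_vecMulVec, dotProduct_comm] using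
    h _ (posSemidef_vecMulVec_self_star v)

lemma re_trace_mul_sub_smul (T A B : Matrix ι ι ℂ) (μ : ℝ) :
    (T * (A - (μ : ℂ) • B)).trace.re = (T * A).trace.re - μ * (T * B).trace.re := by
  simp [Matrix.mul_sub, trace_sub]

variable [DecidableEq ι]

lemma re_trace_one_sub_mul (T A : Matrix ι ι ℂ) :
    ((1 - T) * A).trace.re = A.trace.re - (T * A).trace.re := by
  simp [Matrix.sub_mul, trace_sub]

lemma trace_unitary_conj_mul_unitary_conj (U : unitary (Matrix ι ι ℂ)) (A B : Matrix ι ι ℂ) :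
    ((U : Matrix ι ι ℂ) * A * star (U : Matrix ι ι ℂ) *
      (U * B * star (U : Matrix ι ι ℂ))).trace = (A * B).trace := by
  calc _ = ((U : Matrix ι ι ℂ) * (A * (star (U : Matrix ι ι ℂ) * U) * B) *
        star (U : Matrix ι ι ℂ)).trace := by simp only [Matrix.mul_assoc]
    _ = (A * B).trace := by
        rw [trace_mul_cycle, Unitary.coe_star_mul_self, Matrix.mul_one, Matrix.one_mul]

end TracePairing

section Tests

variable {ι : Type*} [Fintype ι] [DecidableEq ι]

lemma IsTest.unitary_conj {T : Matrix ι ι ℂ} (hT : IsTest T) (U : unitary (Matrix ι ι ℂ)) :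
    IsTest (star (U : Matrix ι ι ℂ) * T * (U : Matrix ι ι ℂ)) := by
  refine ⟨hT.1.conjTranspose_mul_mul_same _, ?_⟩
  have h : 1 - star (U : Matrix ι ι ℂ) * T * U = star (U : Matrix ι ι ℂ) * (1 - T) * U := by
    simp [Matrix.mul_sub, Matrix.sub_mul]
  rw [h]
  exact hT.2.conjTranspose_mul_mul_same _

omit [Fintype ι] in
lemma IsTest.re_diag_le_one {T : Matrix ι ι ℂ} (hT : IsTest T) (i : ι) : (T i i).re ≤ 1 := by
  simpa using (Complex.nonneg_iff.mp hT.2.diag_nonneg).1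

lemma IsTest.re_trace_mul_diagonal_le {T : Matrix ι ι ℂ} (hT : IsTest T) (d : ι → ℝ) :
    (T * diagonal (fun i => (d i : ℂ))).trace.re ≤ ∑ i, max (d i) 0 := by
  rw [trace, Complex.re_sum]
  refine Finset.sum_le_sum fun i _ => ?_
  have h0 := (Complex.nonneg_iff.mp (hT.1.diag_nonneg (i := i))).1
  have h1 := hT.re_diag_le_one i
  simp only [diag_apply, mul_diagonal, Complex.mul_re, Complex.ofReal_re, Complex.ofReal_im,
    mul_zero, sub_zero]
  rcases le_total 0 (d i) with hd | hd
  · rw [max_eq_left hd]; nlinarith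
  · rw [max_eq_right hd]; nlinarith

omit [Fintype ι] in
lemma isTest_diagonal_indicator (p : ι → Prop) [DecidablePred p] :
    IsTest (diagonal fun i => if p i then (1 : ℂ) else 0) := by
  refine ⟨PosSemidef.diagonal fun i => ?_, ?_⟩
  · dsimp only; split_ifs <;> simp
  · rw [← diagonal_one, diagonal_sub]
    refine PosSemidef.diagonal fun i => ?_
    dsimp only; split_ifs <;> simp

lemma nnProj_of_isHermitian {X : Matrix ι ι ℂ} (hX : X.IsHermitian) :
    nnProj X = (hX.eigenvectorUnitary : Matrix ι ι ℂ) *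
      (diagonal fun i => if 0 ≤ hX.eigenvalues i then (1 : ℂ) else 0) *
      star (hX.eigenvectorUnitary : Matrix ι ι ℂ) :=
  dif_pos hX

lemma isTest_nnProj {X : Matrix ι ι ℂ} (hX : X.IsHermitian) : IsTest (nnProj X) := by
  simpa [nnProj_of_isHermitian hX] using
    (isTest_diagonal_indicator _).unitary_conj (star hX.eigenvectorUnitary)

lemma re_trace_nnProj_mul {X : Matrix ι ι ℂ} (hX : X.IsHermitian) :
    (nnProj X * X).trace.re = ∑ i, max (hX.eigenvalues i) 0 := by
  conv_lhs => enter [1, 1, 2]; rw [hX.spectral_theorem, Unitary.conjStarAlgAut_apply]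
  rw [nnProj_of_isHermitian hX, trace_unitary_conj_mul_unitary_conj, diagonal_mul_diagonal,
    trace_diagonal, Complex.re_sum]
  refine Finset.sum_congr rfl fun i _ => ?_
  split_ifs with h
  · simp [h]
  · simp [(not_le.mp h).le]

lemma re_trace_nnProj_mul_nonneg {X : Matrix ι ι ℂ} (hX : X.IsHermitian) :
    0 ≤ (nnProj X * X).trace.re :=
  re_trace_nnProj_mul hX ▸ Finset.sum_nonneg fun _ _ => le_max_right _ _

lemma IsTest.re_trace_mul_le_re_trace_nnProj_mul {T X : Matrix ι ι ℂ} (hT : IsTest T)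
    (hX : X.IsHermitian) : (T * X).trace.re ≤ (nnProj X * X).trace.re := by
  set U := hX.eigenvectorUnitary
  have h : (T * X).trace = (star (U : Matrix ι ι ℂ) * T * U *
      diagonal (fun i => (hX.eigenvalues i : ℂ))).trace := by
    conv_lhs => rw [hX.spectral_theorem, Unitary.conjStarAlgAut_apply]
    rw [← Matrix.mul_assoc, ← Matrix.mul_assoc, trace_mul_comm]
    simp only [Matrix.mul_assoc]
    rfl
  rw [h, re_trace_nnProj_mul hX]
  exact (hT.unitary_conj U).re_trace_mul_diagonal_le _

end Tests

section PositiveMaps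

variable {ι : Type*} [Fintype ι] [DecidableEq ι]

def IsPositiveMap (Φ : Matrix ι ι ℂ →ₗ[ℂ] Matrix ι ι ℂ) : Prop :=
  ∀ M : Matrix ι ι ℂ, M.PosSemidef → (Φ M).PosSemidef

variable {Φ : Matrix ι ι ℂ →ₗ[ℂ] Matrix ι ι ℂ}

omit [Fintype ι] [DecidableEq ι] in
lemma IsCP.isPositiveMap (hΦ : IsCP Φ) : IsPositiveMap Φ := fun M hM =>
  (hΦ 1 (M.submatrix Prod.snd Prod.snd) (hM.submatrix _)).submatrix fun i : ι => (0, i)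

open scoped MatrixOrder Matrix.Norms.L2Operator in
lemma IsPositiveMap.map_conjTranspose (hΦ : IsPositiveMap Φ) (A : Matrix ι ι ℂ) :
    Φ Aᴴ = (Φ A)ᴴ :=
  map_star (PositiveLinearMap.mk₀ Φ fun M hM => by
    rw [nonneg_iff_posSemidef] at hM ⊢; exact hΦ M hM) A

omit [DecidableEq ι] in
lemma IsDensityOp.map {ρ : Matrix ι ι ℂ} (hρ : IsDensityOp ρ) (hΦ : IsPositiveMap Φ)
    (hTP : IsTP Φ) : IsDensityOp (Φ ρ) :=
  ⟨hΦ ρ hρ.1, (hTP ρ).trans hρ.2⟩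

variable (Φ) in
def traceDual (Q : Matrix ι ι ℂ) : Matrix ι ι ℂ :=
  of fun i j => (Q * Φ (single j i 1)).trace

lemma trace_traceDual_mul (Q A : Matrix ι ι ℂ) :
    (traceDual Φ Q * A).trace = (Q * Φ A).trace := by
  have hA : A = ∑ i, ∑ j, A i j • single i j (1 : ℂ) := by
    simpa [smul_single] using A.matrix_eq_sum_single
  conv_rhs => rw [hA]
  simp only [map_sum, map_smul, Matrix.mul_sum, Matrix.mul_smul, trace_sum, trace_smul,
    smul_eq_mul]
  simp only [trace, diag, mul_apply, traceDual, of_apply]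
  rw [Finset.sum_comm]
  simp only [mul_comm]

lemma traceDual_sub (Q R : Matrix ι ι ℂ) :
    traceDual Φ (Q - R) = traceDual Φ Q - traceDual Φ R := by
  ext i j
  simp [traceDual, Matrix.sub_mul]

lemma traceDual_one (hTP : IsTP Φ) : traceDual Φ 1 = 1 :=
  ext_iff_trace_mul_right.mpr fun A => by
    rw [trace_traceDual_mul, Matrix.one_mul, Matrix.one_mul, hTP]

lemma IsPositiveMap.isHermitian_traceDual (hΦ : IsPositiveMap Φ) {Q : Matrix ι ι ℂ}
    (hQ : Q.IsHermitian) : (traceDual Φ Q).IsHermitian := by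
  ext i j
  simp only [conjTranspose_apply, traceDual, of_apply]
  rw [← trace_conjTranspose, conjTranspose_mul, hQ.eq, ← hΦ.map_conjTranspose,
    conjTranspose_single, star_one, trace_mul_comm]

lemma IsPositiveMap.posSemidef_traceDual (hΦ : IsPositiveMap Φ) {Q : Matrix ι ι ℂ}
    (hQ : Q.PosSemidef) : (traceDual Φ Q).PosSemidef :=
  posSemidef_of_forall_trace_mul_nonneg (hΦ.isHermitian_traceDual hQ.isHermitian) fun P hP => by
    rw [trace_traceDual_mul]
    exact hQ.trace_mul_nonneg (hΦ P hP)

lemma IsPositiveMap.isTest_traceDual (hΦ : IsPositiveMap Φ) (hTP : IsTP Φ) {Q : Matrix ι ι ℂ}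
    (hQ : IsTest Q) : IsTest (traceDual Φ Q) := by
  refine ⟨hΦ.posSemidef_traceDual hQ.1, ?_⟩
  rw [← traceDual_one hTP, ← traceDual_sub]
  exact hΦ.posSemidef_traceDual hQ.2

end PositiveMaps

section SpectralError

variable {ι : Type*} [Fintype ι] [DecidableEq ι] {ρ σ : Matrix ι ι ℂ}

lemma specErr_eq_one_sub (hρ : ρ.trace = 1) (μ : ℝ) :
    specErr ρ σ μ = 1 - (nnProj (ρ - (μ : ℂ) • σ) * ρ).trace.re := by
  rw [specErr, re_trace_one_sub_mul, hρ, Complex.one_re]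

lemma specErr_nonneg (hρ : ρ.PosSemidef) (hσ : σ.IsHermitian) (μ : ℝ) : 0 ≤ specErr ρ σ μ :=
  (isTest_nnProj (hρ.isHermitian.sub_real_smul hσ μ)).2.re_trace_mul_nonneg hρ

lemma specErr_le_one (hρ : IsDensityOp ρ) (hσ : σ.IsHermitian) (μ : ℝ) :
    specErr ρ σ μ ≤ 1 := by
  rw [specErr_eq_one_sub hρ.2]
  linarith [(isTest_nnProj (hρ.1.isHermitian.sub_real_smul hσ μ)).1.re_trace_mul_nonneg hρ.1]

lemma specErr_le_specErr_map_add (hρ : IsDensityOp ρ) (hσ : σ.PosSemidef)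
    {Φ : Matrix ι ι ℂ →ₗ[ℂ] Matrix ι ι ℂ} (hΦ : IsPositiveMap Φ) (hTP : IsTP Φ)
    {μ' μ : ℝ} (hμ' : 0 ≤ μ') (hμ : 0 < μ) :
    specErr ρ σ μ' ≤ specErr (Φ ρ) (Φ σ) μ + μ' / μ := by
  have hΦρ := hρ.map hΦ hTP
  have hX := hρ.1.isHermitian.sub_real_smul hσ.isHermitian μ'
  have hY := hΦρ.1.isHermitian.sub_real_smul (hΦ σ hσ).isHermitian μ
  set Q := nnProj (Φ ρ - (μ : ℂ) • Φ σ)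
  have hQ : IsTest Q := isTest_nnProj hY
  -- Neyman–Pearson: the pulled-back test `Φ†Q` does no better than `{ρ - μ'σ ≥ 0}`.
  have hNP := (hΦ.isTest_traceDual hTP hQ).re_trace_mul_le_re_trace_nnProj_mul hX
  rw [re_trace_mul_sub_smul, re_trace_mul_sub_smul, trace_traceDual_mul,
    trace_traceDual_mul] at hNP
  have hQY := re_trace_nnProj_mul_nonneg hY
  rw [re_trace_mul_sub_smul] at hQY
  have hQρ := hQ.2.re_trace_mul_nonneg hΦρ.1
  rw [re_trace_one_sub_mul, hΦρ.2, Complex.one_re] at hQρ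
  have hPσ := mul_nonneg hμ' ((isTest_nnProj hX).1.re_trace_mul_nonneg hσ)
  have hQσ : μ' * (Q * Φ σ).trace.re ≤ μ' / μ := by
    rw [le_div_iff₀ hμ]
    nlinarith
  rw [specErr_eq_one_sub hρ.2, specErr_eq_one_sub hΦρ.2]
  linarith

end SpectralError

lemma limsup_le_of_le_add_of_tendsto_zero {α : Type*} {l : Filter α} [l.NeBot] {f g h : α → ℝ}
    {c : ℝ} (hf : IsCoboundedUnder (· ≤ ·) l f) (hg : IsBoundedUnder (· ≤ ·) l g)
    (hh : Tendsto h l (𝓝 0)) (hfgh : ∀ x, f x ≤ g x + h x) (hgc : limsup g l ≤ c) :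
    limsup f l ≤ c := by
  refine le_of_forall_pos_le_add fun δ hδ => limsup_le_of_le hf ?_
  have hgc' := hgc.trans_lt (lt_add_of_pos_right c (half_pos hδ))
  filter_upwards [eventually_lt_of_limsup_lt hgc' hg, hh.eventually_lt_const (half_pos hδ)]
    with x hgx hhx
  linarith [hfgh x]

lemma tendsto_exp_nat_mul_of_neg {b : ℝ} (hb : b < 0) :
    Tendsto (fun n : ℕ => Real.exp (n * b)) atTop (𝓝 0) :=
  Real.tendsto_exp_atBot.comp (tendsto_natCast_atTop_atTop.atTop_mul_const_of_neg hb)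

lemma EReal.sSup_image_coe_le_of_forall_lt {S T : Set ℝ} (h : ∀ a ∈ S, ∀ b < a, b ∈ T) :
    sSup ((↑) '' S : Set EReal) ≤ sSup ((↑) '' T) := by
  refine sSup_le ?_
  rintro _ ⟨a, ha, rfl⟩
  refine le_of_forall_lt fun c hc => ?_
  obtain ⟨b, hcb, hba⟩ := EReal.exists_between_coe_real hc
  exact hcb.trans_le (le_sSup ⟨b, h a ha b (EReal.coe_lt_coe_iff.mp hba), rfl⟩)

theorem stmt16_general {Hn : ℕ → Type*} [∀ n, Fintype (Hn n)] [∀ n, DecidableEq (Hn n)]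
    (ρ σ : (n : ℕ) → Matrix (Hn n) (Hn n) ℂ)
    (hρ : ∀ n, IsDensityOp (ρ n)) (hσ : ∀ n, IsDensityOp (σ n))
    (Φ : (n : ℕ) → Matrix (Hn n) (Hn n) ℂ →ₗ[ℂ] Matrix (Hn n) (Hn n) ℂ)
    (hCP : ∀ n, IsCP (Φ n)) (hTP : ∀ n, IsTP (Φ n))
    (ε : ℝ) :
    Dlow ε (fun n => Φ n (ρ n)) (fun n => Φ n (σ n)) ≤ Dlow ε ρ σ := by
  have hΦ n := (hCP n).isPositiveMap
  refine EReal.sSup_image_coe_le_of_forall_lt fun a ha a' ha' => ?_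
  refine limsup_le_of_le_add_of_tendsto_zero ?_ ?_
    (tendsto_exp_nat_mul_of_neg (sub_neg.mpr ha')) (fun n => ?_) ha
  · exact isCoboundedUnder_le_of_le atTop fun n =>
      specErr_nonneg (hρ n).1 (hσ n).1.isHermitian _
  · exact isBoundedUnder_of ⟨1, fun n =>
      specErr_le_one ((hρ n).map (hΦ n) (hTP n)) ((hΦ n) _ (hσ n).1).isHermitian _⟩
  · have h := specErr_le_specErr_map_add (hρ n) (hσ n).1 (hΦ n) (hTP n)
      (Real.exp_pos (n * a')).le (Real.exp_pos (n * a))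
    rwa [← Real.exp_sub, ← mul_sub] at h

/-- **Monotonicity of the spectral inf-divergence rate under CPTP maps.**
For CPTP maps `Φ_n` and every `ε ∈ [0,1]`,
`D̲(ε|ρ⃗‖σ⃗) ≥ D̲(ε|{Φ_n(ρ_n)}‖{Φ_n(σ_n)})`. -/
theorem stmt16 {Hn : ℕ → Type*} [∀ n, Fintype (Hn n)] [∀ n, DecidableEq (Hn n)]
    (ρ σ : (n : ℕ) → Matrix (Hn n) (Hn n) ℂ)
    (hρ : ∀ n, IsDensityOp (ρ n)) (hσ : ∀ n, IsDensityOp (σ n))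
    (Φ : (n : ℕ) → Matrix (Hn n) (Hn n) ℂ →ₗ[ℂ] Matrix (Hn n) (Hn n) ℂ)
    (hCP : ∀ n, IsCP (Φ n)) (hTP : ∀ n, IsTP (Φ n))
    (ε : ℝ) (hε0 : 0 ≤ ε) (hε1 : ε ≤ 1) :
    Dlow ε (fun n => Φ n (ρ n)) (fun n => Φ n (σ n)) ≤ Dlow ε ρ σ :=
  stmt16_general ρ σ hρ hσ Φ hCP hTP ε
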